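/- arXiv:2212.07209 — 2 statements merged into one kernel-verified Lean document; each statement's English description precedes it below -/
import Mathlib

section
/- (Proposition 1) For every fixed t_f ≥ 0, the value function ω(·,t_f) is Lipschitz continuous in the initial state: for all r₀, r̂₀ ∈ ℝ⁷, |ω(r₀,t_f) − ω(r̂₀,t_f)| ≤ max(L_g, L_ν) · e^{t_f·L_f} · ‖r₀ − r̂₀‖. -/
open Real MeasureTheory Set

noncomputable section

/-- The state space ℝ⁷. -/
abbrev St : Type := Fin 7 → ℝ

/-- The control value space ℝ³ (incidence angle, sideslip angle, thrust). -/
abbrev Ctrl : Type := ℝ × ℝ × ℝ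

/-- The compact control set U = [-π,π] × [-π/2,π/2] × [0,T_max]. -/
def ctrlSet (Tmax : ℝ) : Set Ctrl :=
  Icc (-π) π ×ˢ Icc (-(π / 2)) (π / 2) ×ˢ Icc 0 Tmax

/-- `(r, u)` is a trajectory-control pair on `[a, b]` starting at `r₀`:
`u` is a measurable policy with values in the control set, `r` is (absolutely)
continuous on `[a, b]`, `r a = r₀` and `r` solves `ṙ = f(r, u)` in integral form. -/
def IsTrajOn (f : St → Ctrl → St) (Tmax : ℝ) (r₀ : St) (a b : ℝ)
    (r : ℝ → St) (u : ℝ → Ctrl) : Prop :=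
  ContinuousOn r (Icc a b) ∧ Measurable u ∧ (∀ t, u t ∈ ctrlSet Tmax) ∧
  r a = r₀ ∧ ∀ t ∈ Icc a b, r t = r₀ + ∫ s in a..t, f (r s) (u s)

/-- `(r, u) ∈ Π_{r₀, t_f}`. -/
def IsTraj (f : St → Ctrl → St) (Tmax : ℝ) (r₀ : St) (tf : ℝ)
    (r : ℝ → St) (u : ℝ → Ctrl) : Prop :=
  IsTrajOn f Tmax r₀ (-tf) 0 r u

/-- The cost `max(ν(r(0)), max_{τ ∈ [-t_f, 0]} g(r(τ)))` of a trajectory. -/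
def trajCost (g ν : St → ℝ) (tf : ℝ) (r : ℝ → St) : ℝ :=
  max (ν (r 0)) (sSup ((fun τ => g (r τ)) '' Icc (-tf) 0))

/-- The value function ω(r₀, t_f). -/
def valueFn (f : St → Ctrl → St) (Tmax : ℝ) (g ν : St → ℝ) (r₀ : St) (tf : ℝ) : ℝ :=
  sInf {y | ∃ r u, IsTraj f Tmax r₀ tf r u ∧ y = trajCost g ν tf r}

open scoped NNReal

/-! The uniform Lipschitz bound on `f` over `U` forces `f r u` to be independent of `u ∈ U`, so
every trajectory solves one autonomous Lipschitz ODE `ṙ = F r`. Given a trajectory from `r̂₀`,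
Picard–Lindelöf yields one from `r₀` under the same policy, and Grönwall keeps the two within
`e^{t_f L_f} ‖r₀ - r̂₀‖` of each other on `[-t_f, 0]`. The Lipschitz bounds on `g` and `ν` transfer
this distance to the costs, and hence to their infima. -/

section IntegralCurve

variable {E : Type*} [NormedAddCommGroup E] [NormedSpace ℝ E]
  {F : E → E} {γ : ℝ → E} {a b : ℝ}

theorem IsIntegralCurveOn.dist_le {K : ℝ≥0} (hK : LipschitzWith K F) {γ₁ γ₂ : ℝ → E}
    (h₁ : IsIntegralCurveOn γ₁ (fun _ ↦ F) (Icc a b))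
    (h₂ : IsIntegralCurveOn γ₂ (fun _ ↦ F) (Icc a b)) :
    ∀ t ∈ Icc a b, dist (γ₁ t) (γ₂ t) ≤ dist (γ₁ a) (γ₂ a) * exp (K * (t - a)) :=
  have right_deriv {γ : ℝ → E} (h : IsIntegralCurveOn γ (fun _ ↦ F) (Icc a b)) :
      ∀ t ∈ Ico a b, HasDerivWithinAt γ (F (γ t)) (Ici t) t := fun t ht ↦
    (h t (Ico_subset_Icc_self ht)).mono_of_mem_nhdsWithin (Icc_mem_nhdsGE_of_mem ht)
  dist_le_of_trajectories_ODE (fun _ ↦ hK) h₁.continuousOn (right_deriv h₁)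
    h₂.continuousOn (right_deriv h₂) le_rfl

variable [CompleteSpace E]

theorem IsIntegralCurveOn.eq_add_integral (hF : Continuous F)
    (hγ : IsIntegralCurveOn γ (fun _ ↦ F) (Icc a b)) :
    ∀ t ∈ Icc a b, γ t = γ a + ∫ s in a..t, F (γ s) := by
  intro t ht
  have hsub : uIcc a t ⊆ Icc a b := by
    rw [uIcc_of_le ht.1]; exact Icc_subset_Icc le_rfl ht.2
  exact (ODE.picard_eq_of_hasDerivAt (f := fun _ ↦ F) (u := univ)
    ((hF.comp continuous_snd).continuousOn)
    (fun t' ht' ↦ (hγ t' (hsub ht')).mono hsub) (mapsTo_univ _ _)).symm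

theorem isIntegralCurveOn_of_eq_add_integral (hF : Continuous F) {x : E}
    (hγc : ContinuousOn γ (Icc a b)) (hγ : ∀ t ∈ Icc a b, γ t = x + ∫ s in a..t, F (γ s)) :
    IsIntegralCurveOn γ (fun _ ↦ F) (Icc a b) := fun _ ht ↦
  (ODE.hasDerivWithinAt_picard_Icc (f := fun _ ↦ F) (u := univ)
    (left_mem_Icc.2 (ht.1.trans ht.2)) ((hF.comp continuous_snd).continuousOn) hγc
    (fun _ _ ↦ mem_univ _) x ht).congr_of_mem hγ ht

theorem exists_isIntegralCurveOn_Icc {K : ℝ≥0} {M : ℝ} (hK : LipschitzWith K F)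
    (hM : ∀ z, ‖F z‖ ≤ M) (hab : a ≤ b) (x : E) :
    ∃ γ : ℝ → E, γ a = x ∧ IsIntegralCurveOn γ (fun _ ↦ F) (Icc a b) := by
  have hM0 : 0 ≤ M := (norm_nonneg _).trans (hM x)
  have hPL : IsPicardLindelof (fun _ ↦ F) (⟨a, le_rfl, hab⟩ : Icc a b) x
      (M.toNNReal * (b - a).toNNReal) 0 M.toNNReal K := by
    refine IsPicardLindelof.of_time_independent (fun z _ ↦ ?_) hK.lipschitzOnWith ?_
    · simpa [hM0] using hM z
    · simp [hM0, hab]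
  exact hPL.exists_eq_forall_mem_Icc_hasDerivWithinAt₀

end IntegralCurve

theorem nonneg_of_norm_sub_le_mul {E G : Type*} [NormedAddCommGroup E] [Nontrivial E]
    [SeminormedAddCommGroup G] {φ : E → G} {L : ℝ}
    (h : ∀ a b, ‖φ a - φ b‖ ≤ L * ‖a - b‖) : 0 ≤ L := by
  obtain ⟨a, ha⟩ := exists_ne (0 : E)
  have := (norm_nonneg _).trans (h a 0)
  rw [sub_zero] at this
  exact nonneg_of_mul_nonneg_left this (norm_pos_iff.2 ha)

theorem apply_eq_apply_of_norm_sub_le {X U E : Type*} [SeminormedAddCommGroup X]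
    [NormedAddCommGroup E] {f : X → U → E} {S : Set U} {L : ℝ}
    (hf : ∀ r₁ r₂ u₁ u₂, u₁ ∈ S → u₂ ∈ S → ‖f r₁ u₁ - f r₂ u₂‖ ≤ L * ‖r₁ - r₂‖)
    (x : X) {u v : U} (hu : u ∈ S) (hv : v ∈ S) : f x u = f x v := by
  simpa [sub_eq_zero] using hf x x u v hu hv

theorem csSup_image_le_csSup_image_add {α : Type*} {s : Set α} {φ ψ : α → ℝ} {c : ℝ}
    (hs : s.Nonempty) (hφ : BddAbove (φ '' s)) (h : ∀ x ∈ s, ψ x ≤ φ x + c) :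
    sSup (ψ '' s) ≤ sSup (φ '' s) + c :=
  csSup_le (hs.image _) <| forall_mem_image.2 fun x hx ↦
    (h x hx).trans (add_le_add_left (le_csSup hφ (mem_image_of_mem φ hx)) c)

section Trajectories

variable {f : St → Ctrl → St} {Tmax : ℝ} {F : St → St}

theorem IsTrajOn.norm_sub_le {x : St} {a b : ℝ} {r : ℝ → St} {u : ℝ → Ctrl} {M : ℝ}
    (hM : ∀ z v, ‖f z v‖ ≤ M) (hr : IsTrajOn f Tmax x a b r u) {t : ℝ} (ht : t ∈ Icc a b) :
    ‖r t - x‖ ≤ M * (t - a) := by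
  rw [hr.2.2.2.2 t ht, add_sub_cancel_left]
  simpa [abs_of_nonneg (sub_nonneg.2 ht.1)] using
    intervalIntegral.norm_integral_le_of_norm_le_const (a := a) (b := t) fun s _ ↦ hM (r s) (u s)

theorem IsTrajOn.isIntegralCurveOn (hfF : ∀ z v, v ∈ ctrlSet Tmax → f z v = F z)
    (hF : Continuous F) {x : St} {a b : ℝ} {r : ℝ → St} {u : ℝ → Ctrl}
    (hr : IsTrajOn f Tmax x a b r u) : IsIntegralCurveOn r (fun _ ↦ F) (Icc a b) := by
  obtain ⟨hrc, -, hU, -, hr⟩ := hr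
  refine isIntegralCurveOn_of_eq_add_integral (x := x) hF hrc fun t ht ↦ ?_
  rw [hr t ht, intervalIntegral.integral_congr fun s _ ↦ hfF _ _ (hU s)]

theorem IsIntegralCurveOn.isTrajOn (hfF : ∀ z v, v ∈ ctrlSet Tmax → f z v = F z)
    (hF : Continuous F) {a b : ℝ} {γ : ℝ → St} {u : ℝ → Ctrl}
    (hγ : IsIntegralCurveOn γ (fun _ ↦ F) (Icc a b)) (hu : Measurable u)
    (hU : ∀ t, u t ∈ ctrlSet Tmax) : IsTrajOn f Tmax (γ a) a b γ u := by
  refine ⟨hγ.continuousOn, hu, hU, rfl, fun t ht ↦ ?_⟩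
  rw [hγ.eq_add_integral hF t ht, intervalIntegral.integral_congr fun s _ ↦ hfF _ _ (hU s)]

theorem IsTrajOn.exists_isTrajOn_dist_le (hfF : ∀ z v, v ∈ ctrlSet Tmax → f z v = F z)
    {K : ℝ≥0} {M : ℝ} (hK : LipschitzWith K F) (hM : ∀ z, ‖F z‖ ≤ M) {y : St} {a b : ℝ}
    {r : ℝ → St} {u : ℝ → Ctrl} (hr : IsTrajOn f Tmax y a b r u) (hab : a ≤ b) (x : St) :
    ∃ r', IsTrajOn f Tmax x a b r' u ∧
      ∀ t ∈ Icc a b, dist (r' t) (r t) ≤ ‖x - y‖ * exp (K * (b - a)) := by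
  obtain ⟨r', rfl, hr'⟩ := exists_isIntegralCurveOn_Icc hK hM hab x
  refine ⟨r', hr'.isTrajOn hfF hK.continuous hr.2.1 hr.2.2.1, fun t ht ↦ ?_⟩
  calc dist (r' t) (r t)
      ≤ dist (r' a) (r a) * exp (K * (t - a)) :=
        hr'.dist_le hK (hr.isIntegralCurveOn hfF hK.continuous) t ht
    _ ≤ ‖r' a - y‖ * exp (K * (b - a)) := by
        rw [dist_eq_norm, hr.2.2.2.1]
        gcongr
        exact ht.2

end Trajectories

section Cost

variable {g ν : St → ℝ} {Lg Lν tf : ℝ}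

theorem trajCost_le_add (hg : ∀ a b, |g a - g b| ≤ Lg * ‖a - b‖)
    (hν : ∀ a b, |ν a - ν b| ≤ Lν * ‖a - b‖) (htf : 0 ≤ tf) {r r' : ℝ → St} {D : ℝ}
    (hr : ContinuousOn r (Icc (-tf) 0)) (hd : ∀ t ∈ Icc (-tf) 0, dist (r' t) (r t) ≤ D) :
    trajCost g ν tf r' ≤ trajCost g ν tf r + max Lg Lν * D := by
  have hIcc : (0 : ℝ) ∈ Icc (-tf) 0 := ⟨neg_nonpos.2 htf, le_rfl⟩
  have hL : 0 ≤ max Lg Lν :=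
    (nonneg_of_norm_sub_le_mul (φ := g) (by simpa only [Real.norm_eq_abs] using hg)).trans
      (le_max_left _ _)
  have shift {φ : St → ℝ} {Lφ : ℝ} (hφ : ∀ a b, |φ a - φ b| ≤ Lφ * ‖a - b‖)
      (hLφ : Lφ ≤ max Lg Lν) (t : ℝ) (ht : t ∈ Icc (-tf) 0) :
      φ (r' t) ≤ φ (r t) + max Lg Lν * D := by
    have := (le_abs_self _).trans (hφ (r' t) (r t))
    have : Lφ * ‖r' t - r t‖ ≤ max Lg Lν * D :=
      mul_le_mul hLφ (dist_eq_norm (r' t) (r t) ▸ hd t ht) (norm_nonneg _) hL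
    linarith
  have hg_bdd : BddAbove ((fun τ ↦ g (r τ)) '' Icc (-tf) 0) :=
    isCompact_Icc.bddAbove_image <|
      (LipschitzWith.of_dist_le' (by simpa only [dist_eq_norm, Real.norm_eq_abs] using hg))
        |>.continuous.comp_continuousOn hr
  exact (max_le_max (shift hν (le_max_right _ _) 0 hIcc)
    (csSup_image_le_csSup_image_add ⟨0, hIcc⟩ hg_bdd (shift hg (le_max_left _ _)))).trans
    (max_add_add_right _ _ _).le

end Cost

section ValueFunction

variable {f : St → Ctrl → St} {Tmax : ℝ} {g ν : St → ℝ} {Lν tf M : ℝ}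

theorem valueFn_le_trajCost (hfM : ∀ z v, ‖f z v‖ ≤ M)
    (hν : ∀ a b, |ν a - ν b| ≤ Lν * ‖a - b‖) (htf : 0 ≤ tf) {x : St} {r : ℝ → St}
    {u : ℝ → Ctrl} (hr : IsTraj f Tmax x tf r u) :
    valueFn f Tmax g ν x tf ≤ trajCost g ν tf r := by
  refine csInf_le ⟨ν x - Lν * (M * tf), ?_⟩ ⟨r, u, hr, rfl⟩
  rintro _ ⟨r, u, hr, rfl⟩
  have hLν : 0 ≤ Lν :=
    nonneg_of_norm_sub_le_mul (φ := ν) (by simpa only [Real.norm_eq_abs] using hν)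
  have hdrift : ‖r 0 - x‖ ≤ M * tf := by
    simpa using hr.norm_sub_le hfM ⟨neg_nonpos.2 htf, le_rfl⟩
  have := (le_abs_self _).trans (hν x (r 0))
  have := mul_le_mul_of_nonneg_left (norm_sub_rev x (r 0) ▸ hdrift) hLν
  have : ν (r 0) ≤ trajCost g ν tf r := le_max_left _ _
  linarith

theorem valueFn_le_add {F : St → St} (hfF : ∀ z v, v ∈ ctrlSet Tmax → f z v = F z) {K : ℝ≥0}
    (hK : LipschitzWith K F) (hFM : ∀ z, ‖F z‖ ≤ M) (hfM : ∀ z v, ‖f z v‖ ≤ M) {Lg : ℝ}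
    (hg : ∀ a b, |g a - g b| ≤ Lg * ‖a - b‖) (hν : ∀ a b, |ν a - ν b| ≤ Lν * ‖a - b‖)
    (htf : 0 ≤ tf) {y : St} (hne : ∃ r u, IsTraj f Tmax y tf r u) (x : St) :
    valueFn f Tmax g ν x tf ≤ valueFn f Tmax g ν y tf + max Lg Lν * exp (K * tf) * ‖x - y‖ := by
  obtain ⟨r₀, u₀, hr₀⟩ := hne
  rw [← sub_le_iff_le_add]
  refine le_csInf ⟨_, r₀, u₀, hr₀, rfl⟩ ?_
  rintro _ ⟨r, u, hr, rfl⟩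
  obtain ⟨r', hr', hd⟩ := IsTrajOn.exists_isTrajOn_dist_le hfF hK hFM hr (neg_nonpos.2 htf) x
  rw [zero_sub, neg_neg] at hd
  have := trajCost_le_add hg hν htf hr.1 hd
  have := valueFn_le_trajCost (g := g) hfM hν htf hr'
  rw [sub_le_iff_le_add]
  linarith

end ValueFunction

theorem value_lipschitz_general
    (f : St → Ctrl → St) (Tmax : ℝ) (Lf Lg Lν : ℝ) (g ν : St → ℝ)
    (hf_bdd : ∃ M, ∀ r u, ‖f r u‖ ≤ M)
    (hf_lip : ∀ r₁ r₂ u₁ u₂, u₁ ∈ ctrlSet Tmax → u₂ ∈ ctrlSet Tmax →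
      ‖f r₁ u₁ - f r₂ u₂‖ ≤ Lf * ‖r₁ - r₂‖)
    (hg_lip : ∀ a b, |g a - g b| ≤ Lg * ‖a - b‖)
    (hν_lip : ∀ a b, |ν a - ν b| ≤ Lν * ‖a - b‖)
    (hne : ∀ (r₀ : St) (tf : ℝ), 0 ≤ tf → ∃ r u, IsTraj f Tmax r₀ tf r u)
    (tf : ℝ) (htf : 0 ≤ tf) :
    ∀ r₀ rhat₀ : St,
      |valueFn f Tmax g ν r₀ tf - valueFn f Tmax g ν rhat₀ tf| ≤
        max Lg Lν * Real.exp (tf * Lf) * ‖r₀ - rhat₀‖ := by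
  obtain ⟨M, hM⟩ := hf_bdd
  obtain ⟨-, u, -, -, hU, -⟩ := hne 0 0 le_rfl
  set F : St → St := fun z ↦ f z (u 0)
  have hfF : ∀ z v, v ∈ ctrlSet Tmax → f z v = F z := fun z _ hv ↦
    apply_eq_apply_of_norm_sub_le hf_lip z hv (hU 0)
  have hF_lip : ∀ a b, ‖F a - F b‖ ≤ Lf * ‖a - b‖ := fun a b ↦ hf_lip a b _ _ (hU 0) (hU 0)
  have hLf : 0 ≤ Lf := nonneg_of_norm_sub_le_mul hF_lip
  have hK : LipschitzWith Lf.toNNReal F :=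
    LipschitzWith.of_dist_le' (by simpa only [dist_eq_norm] using hF_lip)
  have one_sided (x y : St) := valueFn_le_add hfF hK (fun z ↦ hM z (u 0)) hM hg_lip hν_lip htf
    (hne y tf htf) x
  simp only [Real.coe_toNNReal _ hLf, mul_comm _ tf] at one_sided
  intro r₀ rhat₀
  have reverse := one_sided rhat₀ r₀
  rw [norm_sub_rev] at reverse
  exact abs_sub_le_iff.2 ⟨by linarith [one_sided r₀ rhat₀], by linarith⟩

/-- Proposition 1: for every fixed t_f ≥ 0, the value function
ω(·, t_f) is Lipschitz in the initial state with constant max(L_g, L_ν)·e^{t_f L_f}. -/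
theorem value_lipschitz
    (f : St → Ctrl → St) (Tmax : ℝ) (Lf Lg Lν : ℝ) (g ν : St → ℝ)
    (hLf : 0 < Lf)
    (hf_bdd : ∃ M, ∀ r u, ‖f r u‖ ≤ M)
    (hf_lip : ∀ r₁ r₂ u₁ u₂, u₁ ∈ ctrlSet Tmax → u₂ ∈ ctrlSet Tmax →
      ‖f r₁ u₁ - f r₂ u₂‖ ≤ Lf * ‖r₁ - r₂‖)
    (hg_lip : ∀ a b, |g a - g b| ≤ Lg * ‖a - b‖)
    (hν_lip : ∀ a b, |ν a - ν b| ≤ Lν * ‖a - b‖)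
    (hne : ∀ (r₀ : St) (tf : ℝ), 0 ≤ tf → ∃ r u, IsTraj f Tmax r₀ tf r u)
    (tf : ℝ) (htf : 0 ≤ tf) :
    ∀ r₀ rhat₀ : St,
      |valueFn f Tmax g ν r₀ tf - valueFn f Tmax g ν rhat₀ tf| ≤
        max Lg Lν * Real.exp (tf * Lf) * ‖r₀ - rhat₀‖ :=
  value_lipschitz_general f Tmax Lf Lg Lν g ν hf_bdd hf_lip hg_lip hν_lip hne tf htf
end
end

section
/- (Explicit Hamiltonian) Let m > 0, v_exhaust > 0, T_max ≥ 0 and q₄, q₅, q₆, q₇ ∈ ℝ. Then the minimum over (α, δ, T) ∈ [-π, π] × [-π/2, π/2] × [0, T_max] of (T/m)·( q₄·cos α + sin α·( q₅·sin δ + q₆·cos δ ) ) − q₇·T/v_exhaust equals −max( q₇·T_max/v_exhaust + (T_max/m)·√(q₄² + q₅² + q₆²), 0 ), and the minimum is attained. -/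
open Real Set

/-!
The bracket is `q ⬝ u` for `q = (q₄, q₅, q₆)` and the spherical direction
`u = (cos α, sin α sin δ, sin α cos δ)`, so its minimum over the angles is `-‖q‖`. Both angles
enter through expressions `a cos θ + b sin θ`, whose square is at most `a² + b²` by
Cauchy–Schwarz, with `-√(a² + b²)` attained at `θ = arg (-(a + b i))`. The objective is then
`T (q ⬝ u / m - q₇ / vex)`, linear in `T`, so its minimum over `T ∈ [0, T_max]` sits at an endpoint.
-/

theorem sq_mul_cos_add_mul_sin_le (a b θ : ℝ) : (a * cos θ + b * sin θ) ^ 2 ≤ a ^ 2 + b ^ 2 := by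
  nlinarith [sin_sq_add_cos_sq θ, sq_nonneg (a * sin θ - b * cos θ)]

theorem exists_mul_cos_add_mul_sin_eq_neg_sqrt (a b : ℝ) :
    ∃ θ ∈ Icc (-π) π, a * cos θ + b * sin θ = -√(a ^ 2 + b ^ 2) := by
  set z : ℂ := -(a + b * Complex.I)
  have hnorm : ‖z‖ = √(a ^ 2 + b ^ 2) := by rw [norm_neg, Complex.norm_add_mul_I]
  have hcos : ‖z‖ * cos z.arg = -a := by simp [z, Complex.norm_mul_cos_arg]
  have hsin : ‖z‖ * sin z.arg = -b := by simp [z, Complex.norm_mul_sin_arg]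
  refine ⟨z.arg, ⟨(Complex.neg_pi_lt_arg z).le, Complex.arg_le_pi z⟩, ?_⟩
  rcases eq_or_ne ‖z‖ 0 with hz | hz
  · simp only [hz, zero_mul] at hcos hsin
    obtain ⟨rfl, rfl⟩ : a = 0 ∧ b = 0 := ⟨by linarith, by linarith⟩
    simp
  · have hsq : ‖z‖ ^ 2 = a ^ 2 + b ^ 2 := by rw [hnorm, sq_sqrt (by positivity)]
    apply mul_left_cancel₀ hz
    linear_combination a * hcos + b * hsin + hsq - ‖z‖ * hnorm

theorem exists_sq_mul_cos_add_mul_sin_eq (a b : ℝ) :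
    ∃ θ ∈ Icc (-(π / 2)) (π / 2), (a * cos θ + b * sin θ) ^ 2 = a ^ 2 + b ^ 2 := by
  obtain ⟨θ, ⟨hθl, hθr⟩, hθ⟩ := exists_mul_cos_add_mul_sin_eq_neg_sqrt a b
  have hsq : (a * cos θ + b * sin θ) ^ 2 = a ^ 2 + b ^ 2 := by
    rw [hθ, neg_sq, sq_sqrt (by positivity)]
  -- `a cos θ + b sin θ` only changes sign under `θ ↦ θ ± π`.
  rcases le_or_gt θ (-(π / 2)) with hlo | hlo
  · refine ⟨θ + π, ⟨by linarith, by linarith⟩, ?_⟩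
    rw [cos_add_pi, sin_add_pi, ← hsq]; ring
  rcases le_or_gt θ (π / 2) with hhi | hhi
  · exact ⟨θ, ⟨hlo.le, hhi⟩, hsq⟩
  · refine ⟨θ - π, ⟨by linarith, by linarith⟩, ?_⟩
    rw [cos_sub_pi, sin_sub_pi, ← hsq]; ring

theorem isLeast_image_sphericalDir_dot (a b c : ℝ) :
    IsLeast ((fun p : ℝ × ℝ => a * cos p.1 + sin p.1 * (b * sin p.2 + c * cos p.2)) ''
      (Icc (-π) π ×ˢ Icc (-(π / 2)) (π / 2))) (-√(a ^ 2 + b ^ 2 + c ^ 2)) := by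
  constructor
  · obtain ⟨δ, hδ, hρ⟩ := exists_sq_mul_cos_add_mul_sin_eq c b
    have hρ' : (b * sin δ + c * cos δ) ^ 2 = b ^ 2 + c ^ 2 := by linarith
    obtain ⟨α, hα, hmin⟩ := exists_mul_cos_add_mul_sin_eq_neg_sqrt a (b * sin δ + c * cos δ)
    refine ⟨(α, δ), ⟨hα, hδ⟩, ?_⟩
    rw [hρ', ← add_assoc] at hmin
    rw [← hmin]; ring
  · rintro _ ⟨⟨α, δ⟩, -, rfl⟩
    apply neg_sqrt_le_of_sq_le
    have hα := sq_mul_cos_add_mul_sin_le a (b * sin δ + c * cos δ) α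
    have hδ := sq_mul_cos_add_mul_sin_le c b δ
    nlinarith

theorem isLeast_image_mul_const_Icc (c : ℝ) {M : ℝ} (hM : 0 ≤ M) :
    IsLeast ((· * c) '' Icc 0 M) (min (M * c) 0) := by
  constructor
  · rcases le_total c 0 with hc | hc
    · exact ⟨M, ⟨hM, le_rfl⟩, (min_eq_left (mul_nonpos_of_nonneg_of_nonpos hM hc)).symm⟩
    · exact ⟨0, ⟨le_rfl, hM⟩, by simp [mul_nonneg hM hc]⟩
  · rintro _ ⟨T, ⟨hT0, hTM⟩, rfl⟩
    rcases le_total c 0 with hc | hc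
    · exact min_le_of_left_le (mul_le_mul_of_nonpos_right hTM hc)
    · exact min_le_of_right_le (mul_nonneg hT0 hc)

theorem explicit_hamiltonian_general (m vex Tmax q₄ q₅ q₆ q₇ : ℝ)
    (hm : 0 < m) (hTmax : 0 ≤ Tmax) :
    IsLeast ((fun w : ℝ × ℝ × ℝ =>
        (w.2.2 / m) * (q₄ * Real.cos w.1 +
          Real.sin w.1 * (q₅ * Real.sin w.2.1 + q₆ * Real.cos w.2.1)) -
          q₇ * w.2.2 / vex) ''
        (Icc (-π) π ×ˢ Icc (-(π / 2)) (π / 2) ×ˢ Icc 0 Tmax))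
      (-max (q₇ * Tmax / vex + (Tmax / m) * Real.sqrt (q₄ ^ 2 + q₅ ^ 2 + q₆ ^ 2)) 0) := by
  obtain ⟨⟨⟨α, δ⟩, ⟨hα, hδ⟩, hdir⟩, hdir_le⟩ := isLeast_image_sphericalDir_dot q₄ q₅ q₆
  set S := √(q₄ ^ 2 + q₅ ^ 2 + q₆ ^ 2)
  set c := -S / m - q₇ / vex with hc
  obtain ⟨⟨T, hT, hthrust⟩, hthrust_le⟩ := isLeast_image_mul_const_Icc c hTmax
  dsimp only at hdir hthrust
  have hvalue : -max (q₇ * Tmax / vex + Tmax / m * S) 0 = min (Tmax * c) 0 := by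
    rw [neg_sup, neg_zero]; congr 1; ring
  rw [hvalue]
  refine ⟨⟨(α, δ, T), ⟨hα, hδ, hT⟩, ?_⟩, ?_⟩
  · rw [← hthrust, hc, ← hdir]; ring
  · rintro _ ⟨⟨α, δ, T⟩, ⟨hα, hδ, hT⟩, rfl⟩
    have hS : -S ≤ q₄ * cos α + sin α * (q₅ * sin δ + q₆ * cos δ) :=
      hdir_le ⟨(α, δ), ⟨hα, hδ⟩, rfl⟩
    calc min (Tmax * c) 0 ≤ T * c := hthrust_le ⟨T, hT, rfl⟩
      _ ≤ T * ((q₄ * cos α + sin α * (q₅ * sin δ + q₆ * cos δ)) / m - q₇ / vex) := by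
        have hT0 : 0 ≤ T := hT.1
        rw [hc]
        gcongr
      _ = _ := by ring

/-- Explicit Hamiltonian: the minimum over
(α, δ, T) ∈ [-π, π] × [-π/2, π/2] × [0, T_max] of
(T/m)(q₄ cos α + sin α (q₅ sin δ + q₆ cos δ)) − q₇ T / v_exhaust equals
−max( q₇ T_max / v_exhaust + (T_max/m) √(q₄² + q₅² + q₆²), 0 ), and it is attained. -/
theorem explicit_hamiltonian (m vex Tmax q₄ q₅ q₆ q₇ : ℝ)
    (hm : 0 < m) (hvex : 0 < vex) (hTmax : 0 ≤ Tmax) :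
    IsLeast ((fun w : ℝ × ℝ × ℝ =>
        (w.2.2 / m) * (q₄ * Real.cos w.1 +
          Real.sin w.1 * (q₅ * Real.sin w.2.1 + q₆ * Real.cos w.2.1)) -
          q₇ * w.2.2 / vex) ''
        (Icc (-π) π ×ˢ Icc (-(π / 2)) (π / 2) ×ˢ Icc 0 Tmax))
      (-max (q₇ * Tmax / vex + (Tmax / m) * Real.sqrt (q₄ ^ 2 + q₅ ^ 2 + q₆ ^ 2)) 0) :=
  explicit_hamiltonian_general m vex Tmax q₄ q₅ q₆ q₇ hm hTmax
end
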